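/- arXiv:2501.11582 — 2 statements merged into one kernel-verified Lean document; each statement's English description precedes it below -/
import Mathlib

section
/- Let A and B be independent Poisson random variables with common mean α ≥ 1. Then E[(A − B)·𝟙{A − B ≥ 0}] ≥ c·√α for some universal constant c > 0. -/
open MeasureTheory ProbabilityTheory Real
open scoped NNReal ENNReal

namespace PoissonPosPartAux

lemma cast_descFactorial_succ (n k : ℕ) :
    (n.descFactorial (k + 1) : ℝ) = ((n : ℝ) - k) * (n.descFactorial k : ℝ) := by
  rcases le_or_gt k n with h | h
  · rw [Nat.descFactorial_succ, Nat.cast_mul, Nat.cast_sub h]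
  · rw [Nat.descFactorial_of_lt h, Nat.descFactorial_of_lt (Nat.lt_succ_of_lt h)]
    simp

lemma hasSum_desc (r : ℝ) (k : ℕ) :
    HasSum (fun n : ℕ => (n.descFactorial k : ℝ) * (r ^ n / (n.factorial : ℝ)))
      (r ^ k * Real.exp r) := by
  set f : ℕ → ℝ := fun n => (n.descFactorial k : ℝ) * (r ^ n / (n.factorial : ℝ)) with hf
  have h0 : ∀ i ∈ Finset.range k, f i = 0 := by
    intro i hi
    simp [hf, Nat.descFactorial_of_lt (Finset.mem_range.mp hi)]
  have hexp : HasSum (fun n : ℕ => r ^ n / (n.factorial : ℝ)) (Real.exp r) := by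
    rw [Real.exp_eq_exp_ℝ]
    exact NormedSpace.expSeries_div_hasSum_exp r
  have hshift : HasSum (fun n : ℕ => f (n + k)) (r ^ k * Real.exp r) := by
    have hmul := hexp.mul_left (r ^ k)
    refine HasSum.congr_fun hmul fun n => ?_
    have hfac : ((n.factorial : ℕ) : ℝ) * ((n + k).descFactorial k : ℝ) = (((n + k).factorial : ℕ) : ℝ) := by
      have := Nat.factorial_mul_descFactorial (Nat.le_add_left k n)
      rw [Nat.add_sub_cancel] at this
      exact_mod_cast this
    have hd0 : ((n + k).descFactorial k : ℝ) ≠ 0 := by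
      have : ¬ (n + k < k) := by omega
      exact_mod_cast fun h => this (Nat.descFactorial_eq_zero_iff_lt.mp (by exact_mod_cast h))
    have hn0 : ((n.factorial : ℕ) : ℝ) ≠ 0 := by positivity
    have hnk0 : (((n + k).factorial : ℕ) : ℝ) ≠ 0 := by positivity
    simp only [hf]
    rw [pow_add]
    field_simp
    rw [← hfac]
    ring
  have := (hasSum_nat_add_iff' (f := f) k).mp (by
    rwa [Finset.sum_eq_zero h0, sub_zero])
  exact this

lemma measurable_nat {f : ℕ → ℝ} : Measurable f := measurable_from_nat

lemma summable_desc_pmf (r : ℝ≥0) (k : ℕ) :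
    Summable (fun n : ℕ => (n.descFactorial k : ℝ) * poissonPMFReal r n) := by
  have h := ((hasSum_desc (r : ℝ) k).mul_left (Real.exp (-(r : ℝ)))).summable
  refine h.congr fun n => ?_
  unfold poissonPMFReal
  ring

lemma integrable_desc (r : ℝ≥0) (k : ℕ) :
    Integrable (fun n : ℕ => (n.descFactorial k : ℝ)) (poissonMeasure r) := by
  refine ⟨measurable_nat.aestronglyMeasurable, ?_⟩
  rw [hasFiniteIntegral_def, lintegral_countable']
  have hterm : ∀ n : ℕ,
      ‖(n.descFactorial k : ℝ)‖ₑ * (poissonMeasure r) {n}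
        = ENNReal.ofReal ((n.descFactorial k : ℝ) * poissonPMFReal r n) := by
    intro n
    rw [show (poissonMeasure r) {n} = poissonPMF r n from
      by rw [poissonMeasure_singleton, ← poissonPMFReal_ofReal_eq_poissonPMF]; rfl]
    rw [Real.enorm_eq_ofReal (by positivity)]
    rw [show poissonPMF r n = ENNReal.ofReal (poissonPMFReal r n) from rfl]
    rw [← ENNReal.ofReal_mul (p := ((n.descFactorial k : ℝ))) (by positivity)]
  simp only [hterm]
  rw [← ENNReal.ofReal_tsum_of_nonneg
      (fun n => mul_nonneg (Nat.cast_nonneg _) poissonPMFReal_nonneg) (summable_desc_pmf r k)]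
  exact ENNReal.ofReal_lt_top

lemma integral_desc (r : ℝ≥0) (k : ℕ) :
    ∫ n, (n.descFactorial k : ℝ) ∂(poissonMeasure r) = (r : ℝ) ^ k := by
  have hPM : poissonMeasure r = (poissonPMF r).toMeasure := Measure.ext_iff_singleton.mpr fun n => by
      rw [poissonMeasure_singleton, PMF.toMeasure_apply_singleton _ _ (measurableSet_singleton n),
        ← poissonPMFReal_ofReal_eq_poissonPMF]; rfl
  rw [hPM,
    PMF.integral_eq_tsum _ _ (by rw [← hPM]; exact integrable_desc r k)]
  have hterm : ∀ n : ℕ,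
      (poissonPMF r n).toReal • (n.descFactorial k : ℝ)
        = Real.exp (-(r : ℝ)) * ((n.descFactorial k : ℝ) * ((r : ℝ) ^ n / (n.factorial : ℝ))) := by
    intro n
    rw [show poissonPMF r n = ENNReal.ofReal (poissonPMFReal r n) from rfl,
      ENNReal.toReal_ofReal (by unfold poissonPMFReal; positivity)]
    unfold poissonPMFReal
    simp [smul_eq_mul]
    ring
  simp only [hterm]
  rw [((hasSum_desc (r : ℝ) k).mul_left (Real.exp (-(r : ℝ)))).tsum_eq]
  rw [Real.exp_neg]
  field_simp

lemma d1 (n : ℕ) : (n.descFactorial 1 : ℝ) = (n : ℝ) := by simp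

lemma d2 (n : ℕ) : (n.descFactorial 2 : ℝ) = ((n : ℝ) - 1) * (n : ℝ) := by
  rw [show (2 : ℕ) = 1 + 1 from rfl, cast_descFactorial_succ, d1]
  norm_num

lemma d3 (n : ℕ) : (n.descFactorial 3 : ℝ) = ((n : ℝ) - 2) * (((n : ℝ) - 1) * (n : ℝ)) := by
  rw [show (3 : ℕ) = 2 + 1 from rfl, cast_descFactorial_succ, d2]
  norm_num

lemma d4 (n : ℕ) : (n.descFactorial 4 : ℝ)
    = ((n : ℝ) - 3) * (((n : ℝ) - 2) * (((n : ℝ) - 1) * (n : ℝ))) := by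
  rw [show (4 : ℕ) = 3 + 1 from rfl, cast_descFactorial_succ, d3]
  norm_num

lemma e1 : (fun n : ℕ => (n : ℝ) ^ 1)
    = fun n : ℕ => (n.descFactorial 1 : ℝ) := funext fun n => by rw [d1]; ring

lemma e2 : (fun n : ℕ => (n : ℝ) ^ 2)
    = fun n : ℕ => (n.descFactorial 2 : ℝ) + (n.descFactorial 1 : ℝ) :=
  funext fun n => by rw [d1, d2]; ring

lemma e3 : (fun n : ℕ => (n : ℝ) ^ 3)
    = fun n : ℕ => (n.descFactorial 3 : ℝ) + (3 * (n.descFactorial 2 : ℝ)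
        + (n.descFactorial 1 : ℝ)) :=
  funext fun n => by rw [d1, d2, d3]; ring

lemma e4 : (fun n : ℕ => (n : ℝ) ^ 4)
    = fun n : ℕ => (n.descFactorial 4 : ℝ) + (6 * (n.descFactorial 3 : ℝ)
        + (7 * (n.descFactorial 2 : ℝ) + (n.descFactorial 1 : ℝ))) :=
  funext fun n => by rw [d1, d2, d3, d4]; ring

lemma integrable_pow1 (r : ℝ≥0) :
    Integrable (fun n : ℕ => (n : ℝ) ^ 1) (poissonMeasure r) := by
  rw [e1]; exact integrable_desc r 1

lemma integrable_pow2 (r : ℝ≥0) :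
    Integrable (fun n : ℕ => (n : ℝ) ^ 2) (poissonMeasure r) := by
  rw [e2]; exact (integrable_desc r 2).add (integrable_desc r 1)

lemma integrable_pow3 (r : ℝ≥0) :
    Integrable (fun n : ℕ => (n : ℝ) ^ 3) (poissonMeasure r) := by
  rw [e3]
  exact (integrable_desc r 3).add (((integrable_desc r 2).const_mul 3).add
    (integrable_desc r 1))

lemma integrable_pow4 (r : ℝ≥0) :
    Integrable (fun n : ℕ => (n : ℝ) ^ 4) (poissonMeasure r) := by
  rw [e4]
  exact (integrable_desc r 4).add (((integrable_desc r 3).const_mul 6).add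
    (((integrable_desc r 2).const_mul 7).add (integrable_desc r 1)))

lemma integral_pow1 (r : ℝ≥0) :
    ∫ n, (n : ℝ) ^ 1 ∂(poissonMeasure r) = (r : ℝ) := by
  rw [e1, integral_desc]; norm_num

lemma integral_pow2 (r : ℝ≥0) :
    ∫ n, (n : ℝ) ^ 2 ∂(poissonMeasure r) = (r : ℝ) ^ 2 + r := by
  rw [e2, integral_add (integrable_desc r 2) (integrable_desc r 1),
    integral_desc, integral_desc]
  norm_num

lemma integral_pow3 (r : ℝ≥0) :
    ∫ n, (n : ℝ) ^ 3 ∂(poissonMeasure r) = (r : ℝ) ^ 3 + 3 * (r : ℝ) ^ 2 + r := by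
  have i2 : Integrable (fun n : ℕ => 3 * (n.descFactorial 2 : ℝ) + (n.descFactorial 1 : ℝ))
      (poissonMeasure r) := ((integrable_desc r 2).const_mul 3).add (integrable_desc r 1)
  rw [e3, integral_add (integrable_desc r 3) i2,
    integral_add ((integrable_desc r 2).const_mul 3) (integrable_desc r 1),
    integral_const_mul, integral_desc, integral_desc, integral_desc]
  push_cast
  ring

lemma integral_pow4 (r : ℝ≥0) :
    ∫ n, (n : ℝ) ^ 4 ∂(poissonMeasure r)
      = (r : ℝ) ^ 4 + 6 * (r : ℝ) ^ 3 + 7 * (r : ℝ) ^ 2 + r := by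
  have i1 : Integrable (fun n : ℕ => 7 * (n.descFactorial 2 : ℝ) + (n.descFactorial 1 : ℝ))
      (poissonMeasure r) := ((integrable_desc r 2).const_mul 7).add (integrable_desc r 1)
  have i2 : Integrable (fun n : ℕ => 6 * (n.descFactorial 3 : ℝ)
      + (7 * (n.descFactorial 2 : ℝ) + (n.descFactorial 1 : ℝ)))
      (poissonMeasure r) := ((integrable_desc r 3).const_mul 6).add i1
  rw [e4, integral_add (integrable_desc r 4) i2,
    integral_add ((integrable_desc r 3).const_mul 6) i1,
    integral_add ((integrable_desc r 2).const_mul 7) (integrable_desc r 1),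
    integral_const_mul, integral_const_mul, integral_desc, integral_desc,
    integral_desc, integral_desc]
  push_cast
  ring

lemma map_moment {Ω : Type} [MeasurableSpace Ω] (μ : Measure Ω) (α : ℝ≥0)
    (A : Ω → ℕ) (hA : Measurable A) (hlaw : μ.map A = poissonMeasure α) (k : ℕ)
    (hint : Integrable (fun n : ℕ => (n : ℝ) ^ k) (poissonMeasure α)) :
    Integrable (fun ω => (A ω : ℝ) ^ k) μ ∧
      ∫ ω, (A ω : ℝ) ^ k ∂μ = ∫ n, (n : ℝ) ^ k ∂(poissonMeasure α) := by
  have hg : Measurable (fun n : ℕ => (n : ℝ) ^ k) := measurable_from_nat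
  have hgs : AEStronglyMeasurable (fun n : ℕ => (n : ℝ) ^ k) (μ.map A) :=
    hg.aestronglyMeasurable
  constructor
  · have := (integrable_map_measure hgs hA.aemeasurable).mp (by rwa [hlaw])
    exact this
  · rw [← hlaw, integral_map hA.aemeasurable hgs]

lemma max_zero_eq (x : ℝ) : max 0 x = (|x| + x) / 2 := by
  rcases le_total 0 x with h | h
  · rw [max_eq_right h, abs_of_nonneg h]; ring
  · rw [max_eq_left h, abs_of_nonpos h]; ring

lemma point_ineq (x t : ℝ) (ht : 0 < t) : x ^ 2 ≤ t * |x| + x ^ 4 / t ^ 2 := by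
  rcases le_total |x| t with h | h
  · have h1 : x ^ 2 ≤ t * |x| := by nlinarith [abs_nonneg x, sq_abs x]
    have h2 : (0 : ℝ) ≤ x ^ 4 / t ^ 2 := by positivity
    linarith
  · have ht2 : t ^ 2 ≤ x ^ 2 := by nlinarith [sq_abs x, abs_nonneg x]
    have h2 : x ^ 2 ≤ x ^ 4 / t ^ 2 := by
      rw [le_div_iff₀ (by positivity)]
      nlinarith [sq_nonneg x]
    have h1 : (0 : ℝ) ≤ t * |x| := by positivity
    linarith

end PoissonPosPartAux

open PoissonPosPartAux

set_option maxHeartbeats 1000000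

/-- If `A` and `B` are independent Poisson random variables with common
mean `α ≥ 1`, then `E[(A − B)·𝟙{A − B ≥ 0}] ≥ c·√α` for a universal constant `c > 0`.
(Note `(A − B)·𝟙{A − B ≥ 0} = max 0 (A − B)`.) -/
theorem poisson_positive_part_expectation :
    ∃ c : ℝ, 0 < c ∧
      ∀ {Ω : Type} [MeasurableSpace Ω] (μ : Measure Ω) [IsProbabilityMeasure μ]
        (α : ℝ≥0) (_hα : 1 ≤ α) (A B : Ω → ℕ)
        (_hA : Measurable A) (_hB : Measurable B)
        (_hAlaw : μ.map A = poissonMeasure α)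
        (_hBlaw : μ.map B = poissonMeasure α)
        (_hindep : IndepFun A B μ),
        c * Real.sqrt α ≤ ∫ ω, max 0 ((A ω : ℝ) - (B ω : ℝ)) ∂μ := by
  refine ⟨1/8, by norm_num, ?_⟩
  intro Ω _ μ _ α hα A B hA hB hAlaw hBlaw hindep
  set r : ℝ := (α : ℝ) with hrdef
  have hr1 : (1 : ℝ) ≤ r := by exact_mod_cast hα
  have hr0 : (0 : ℝ) < r := lt_of_lt_of_le one_pos hr1
  -- moments of A and B
  have hA1 := map_moment μ α A hA hAlaw 1 (integrable_pow1 α)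
  have hA2 := map_moment μ α A hA hAlaw 2 (integrable_pow2 α)
  have hA3 := map_moment μ α A hA hAlaw 3 (integrable_pow3 α)
  have hA4 := map_moment μ α A hA hAlaw 4 (integrable_pow4 α)
  have hB1 := map_moment μ α B hB hBlaw 1 (integrable_pow1 α)
  have hB2 := map_moment μ α B hB hBlaw 2 (integrable_pow2 α)
  have hB3 := map_moment μ α B hB hBlaw 3 (integrable_pow3 α)
  have hB4 := map_moment μ α B hB hBlaw 4 (integrable_pow4 α)
  have ia1 := hA1.1; have ia2 := hA2.1; have ia3 := hA3.1; have ia4 := hA4.1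
  have ib1 := hB1.1; have ib2 := hB2.1; have ib3 := hB3.1; have ib4 := hB4.1
  have ma1 : ∫ ω, (A ω : ℝ) ^ 1 ∂μ = r := by rw [hA1.2, integral_pow1]
  have ma2 : ∫ ω, (A ω : ℝ) ^ 2 ∂μ = r ^ 2 + r := by rw [hA2.2, integral_pow2]
  have ma3 : ∫ ω, (A ω : ℝ) ^ 3 ∂μ = r ^ 3 + 3 * r ^ 2 + r := by rw [hA3.2, integral_pow3]
  have ma4 : ∫ ω, (A ω : ℝ) ^ 4 ∂μ = r ^ 4 + 6 * r ^ 3 + 7 * r ^ 2 + r := by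
    rw [hA4.2, integral_pow4]
  have mb1 : ∫ ω, (B ω : ℝ) ^ 1 ∂μ = r := by rw [hB1.2, integral_pow1]
  have mb2 : ∫ ω, (B ω : ℝ) ^ 2 ∂μ = r ^ 2 + r := by rw [hB2.2, integral_pow2]
  have mb3 : ∫ ω, (B ω : ℝ) ^ 3 ∂μ = r ^ 3 + 3 * r ^ 2 + r := by rw [hB3.2, integral_pow3]
  have mb4 : ∫ ω, (B ω : ℝ) ^ 4 ∂μ = r ^ 4 + 6 * r ^ 3 + 7 * r ^ 2 + r := by
    rw [hB4.2, integral_pow4]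
  -- cross moments
  have hcross : ∀ i j : ℕ,
      Integrable (fun ω => (A ω : ℝ) ^ i) μ → Integrable (fun ω => (B ω : ℝ) ^ j) μ →
      Integrable (fun ω => (A ω : ℝ) ^ i * (B ω : ℝ) ^ j) μ ∧
        ∫ ω, (A ω : ℝ) ^ i * (B ω : ℝ) ^ j ∂μ
          = (∫ ω, (A ω : ℝ) ^ i ∂μ) * (∫ ω, (B ω : ℝ) ^ j ∂μ) := by
    intro i j hiA hiB
    have hind : IndepFun (fun ω => (A ω : ℝ) ^ i) (fun ω => (B ω : ℝ) ^ j) μ :=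
      hindep.comp (measurable_from_nat (f := fun n : ℕ => (n : ℝ) ^ i))
        (measurable_from_nat (f := fun n : ℕ => (n : ℝ) ^ j))
    exact ⟨hind.integrable_mul hiA hiB, hind.integral_mul_eq_mul_integral hiA.aestronglyMeasurable hiB.aestronglyMeasurable⟩
  have h11 := hcross 1 1 ia1 ib1
  have h31 := hcross 3 1 ia3 ib1
  have h22 := hcross 2 2 ia2 ib2
  have h13 := hcross 1 3 ia1 ib3
  -- notation
  set X : Ω → ℝ := fun ω => (A ω : ℝ) - (B ω : ℝ) with hXdef
  have iX : Integrable X μ := by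
    have := (ia1.sub ib1)
    simp only [pow_one] at this; exact this
  have hEX : ∫ ω, X ω ∂μ = 0 := by
    have : ∫ ω, X ω ∂μ = (∫ ω, (A ω : ℝ) ^ 1 ∂μ) - ∫ ω, (B ω : ℝ) ^ 1 ∂μ := by
      simp only [hXdef, pow_one]
      exact integral_sub (by simpa [pow_one] using ia1) (by simpa [pow_one] using ib1)
    rw [this, ma1, mb1, sub_self]
  -- second moment of X
  have iX2' : Integrable (fun ω => (A ω : ℝ) ^ 2
      - (2 * ((A ω : ℝ) ^ 1 * (B ω : ℝ) ^ 1) - (B ω : ℝ) ^ 2)) μ :=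
    ia2.sub ((h11.1.const_mul 2).sub ib2)
  have iX2 : Integrable (fun ω => (X ω) ^ 2) μ := by
    refine iX2'.congr (Filter.Eventually.of_forall fun ω => ?_)
    simp only [hXdef]; ring
  have hEX2 : ∫ ω, (X ω) ^ 2 ∂μ = 2 * r := by
    have hfe : ∀ ω, (X ω) ^ 2 = (A ω : ℝ) ^ 2
        - (2 * ((A ω : ℝ) ^ 1 * (B ω : ℝ) ^ 1) - (B ω : ℝ) ^ 2) := by
      intro ω; simp only [hXdef]; ring
    have iSub2 : Integrable (fun ω => 2 * ((A ω : ℝ) ^ 1 * (B ω : ℝ) ^ 1)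
        - (B ω : ℝ) ^ 2) μ := (h11.1.const_mul 2).sub ib2
    rw [integral_congr_ae (Filter.Eventually.of_forall hfe),
      integral_sub ia2 iSub2,
      integral_sub (h11.1.const_mul 2) ib2, integral_const_mul, h11.2,
      ma1, mb1, ma2, mb2]
    ring
  -- fourth moment of X
  have iX4' : Integrable (fun ω => (A ω : ℝ) ^ 4
      - (4 * ((A ω : ℝ) ^ 3 * (B ω : ℝ) ^ 1)
        - (6 * ((A ω : ℝ) ^ 2 * (B ω : ℝ) ^ 2)
          - (4 * ((A ω : ℝ) ^ 1 * (B ω : ℝ) ^ 3) - (B ω : ℝ) ^ 4)))) μ :=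
    ia4.sub ((h31.1.const_mul 4).sub ((h22.1.const_mul 6).sub
      ((h13.1.const_mul 4).sub ib4)))
  have iX4 : Integrable (fun ω => (X ω) ^ 4) μ := by
    refine iX4'.congr (Filter.Eventually.of_forall fun ω => ?_)
    simp only [hXdef]; ring
  have hEX4 : ∫ ω, (X ω) ^ 4 ∂μ = 12 * r ^ 2 + 2 * r := by
    have hfe : ∀ ω, (X ω) ^ 4 = (A ω : ℝ) ^ 4
        - (4 * ((A ω : ℝ) ^ 3 * (B ω : ℝ) ^ 1)
          - (6 * ((A ω : ℝ) ^ 2 * (B ω : ℝ) ^ 2)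
            - (4 * ((A ω : ℝ) ^ 1 * (B ω : ℝ) ^ 3) - (B ω : ℝ) ^ 4))) := by
      intro ω; simp only [hXdef]; ring
    have t3 : Integrable (fun ω => 4 * ((A ω : ℝ) ^ 1 * (B ω : ℝ) ^ 3)
        - (B ω : ℝ) ^ 4) μ := (h13.1.const_mul 4).sub ib4
    have t2 : Integrable (fun ω => 6 * ((A ω : ℝ) ^ 2 * (B ω : ℝ) ^ 2)
        - (4 * ((A ω : ℝ) ^ 1 * (B ω : ℝ) ^ 3) - (B ω : ℝ) ^ 4)) μ :=
      (h22.1.const_mul 6).sub t3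
    have t1 : Integrable (fun ω => 4 * ((A ω : ℝ) ^ 3 * (B ω : ℝ) ^ 1)
        - (6 * ((A ω : ℝ) ^ 2 * (B ω : ℝ) ^ 2)
          - (4 * ((A ω : ℝ) ^ 1 * (B ω : ℝ) ^ 3) - (B ω : ℝ) ^ 4))) μ :=
      (h31.1.const_mul 4).sub t2
    rw [integral_congr_ae (Filter.Eventually.of_forall hfe),
      integral_sub ia4 t1,
      integral_sub (h31.1.const_mul 4) t2,
      integral_sub (h22.1.const_mul 6) t3,
      integral_sub (h13.1.const_mul 4) ib4,
      integral_const_mul, integral_const_mul, integral_const_mul,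
      h31.2, h22.2, h13.2, ma1, mb1, ma2, mb2, ma3, mb3, ma4, mb4]
    ring
  -- the absolute first moment
  have iAbs : Integrable (fun ω => |X ω|) μ := iX.abs
  set s : ℝ := Real.sqrt r with hsdef
  have hs0 : 0 < s := Real.sqrt_pos.mpr hr0
  have hss : s * s = r := Real.mul_self_sqrt hr0.le
  have ht0 : (0 : ℝ) < 4 * s := by linarith
  have hmono : ∫ ω, (X ω) ^ 2 ∂μ
      ≤ ∫ ω, (4 * s * |X ω| + (X ω) ^ 4 / (4 * s) ^ 2) ∂μ := by
    refine integral_mono iX2 ((iAbs.const_mul (4 * s)).add (iX4.div_const _)) ?_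
    intro ω
    exact point_ineq (X ω) (4 * s) ht0
  have hsplit : ∫ ω, (4 * s * |X ω| + (X ω) ^ 4 / (4 * s) ^ 2) ∂μ
      = 4 * s * (∫ ω, |X ω| ∂μ) + (12 * r ^ 2 + 2 * r) / (4 * s) ^ 2 := by
    rw [integral_add (iAbs.const_mul (4 * s)) (iX4.div_const _),
      integral_const_mul, integral_div, hEX4]
  have hIabs0 : 0 ≤ ∫ ω, |X ω| ∂μ := integral_nonneg fun ω => abs_nonneg _
  have hIabs : s / 4 ≤ ∫ ω, |X ω| ∂μ := by
    set I : ℝ := ∫ ω, |X ω| ∂μ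
    rw [hEX2, hsplit] at hmono
    have h16 : (4 * s) ^ 2 = 16 * r := by rw [mul_pow]; nlinarith [hss]
    rw [h16] at hmono
    have hdiv : (12 * r ^ 2 + 2 * r) / (16 * r) = (6 * r + 1) / 8 := by
      field_simp
      ring
    rw [hdiv] at hmono
    -- 2r ≤ 4 s I + (6r+1)/8, r ≥ 1, s² = r  ⟹  I ≥ s/4
    nlinarith [hmono, hss, hr1, hs0, hIabs0, mul_pos hs0 hs0]
  -- positive part is half the absolute value
  have hP : ∫ ω, max 0 (X ω) ∂μ = (∫ ω, |X ω| ∂μ) / 2 := by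
    have hfe : ∀ ω, max 0 (X ω) = (|X ω| + X ω) / 2 := fun ω => max_zero_eq (X ω)
    rw [integral_congr_ae (Filter.Eventually.of_forall hfe), integral_div,
      integral_add iAbs iX, hEX, add_zero]
  have hgoal : ∫ ω, max 0 ((A ω : ℝ) - (B ω : ℝ)) ∂μ = (∫ ω, |X ω| ∂μ) / 2 := hP
  rw [hgoal]
  linarith
end

section
/- Fix a rebuild window of an ordered linear-probing hash table on n slots. For position s ∈ [n], let c_s be the crossing number at s (the number of insertions with hash < s that consume a tombstone with hash ≥ s or a free slot at position ≥ s), let surplus(i, s−1) be the maximum path surplus of the insertion/deletion dot diagram restricted to hash interval [i, s−1], and let free(i, s−1) be the number of free slots in [i, s−1] at the start of the window. Then for any s and any i < s, c_s ≥ surplus(i, s−1) − free(i, s−1). -/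
open Finset
open scoped Classical

/-- Fix a rebuild window of an ordered linear-probing hash table on
`n` slots.  The window performs `T` operations (indexed by time `t : Fin T`), each an
insertion or a deletion of an element with a given hash.  Each insertion consumes
either the tombstone left by an earlier deletion, or a free slot (an element of the set
`free0` of slots free at the start of the window); in ordered linear probing the
consumed tombstone's hash (resp. free slot's position) is at least the insertion's
hash, and no tombstone or free slot is consumed twice.

For a position `s` the crossing number `c_s` counts the insertions with hash `< s`
consuming a tombstone of hash `≥ s` or a free slot at position `≥ s`.  For `i < s` and
any monotone path `P` (recording, for each hash value, a time threshold), the surplus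
of `P` on the hash interval `[i, s−1]` is the number of insertions (blue dots) below
`P` minus the number of deletions (red dots) below `P`.  Then
`c_s ≥ surplus_P(i, s−1) − free(i, s−1)`; taking the maximum over paths `P` gives
`c_s ≥ surplus(i, s−1) − free(i, s−1)`. -/
theorem crossing_number_ge_surplus_minus_free
    (n s i : ℕ) (hs : s ≤ n) (his : i < s)
    (T : ℕ)
    (isIns : Fin T → Bool)          -- whether operation `t` is an insertion
    (hash : Fin T → ℕ)              -- the hash of the element operated on at time `t`
    (hhash : ∀ t, hash t < n)
    -- the slot consumed by each insertion: a tombstone (left by deletion `t'`)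
    -- or a free slot at a given position
    (consumed : Fin T → (Fin T) ⊕ ℕ)
    (free0 : Finset ℕ)              -- slots free at the start of the window
    (hfree0 : ∀ p ∈ free0, p < n)
    (htomb : ∀ t t', consumed t = Sum.inl t' →
      isIns t' = false ∧ t' < t ∧ hash t ≤ hash t')
    (hfree : ∀ t p, consumed t = Sum.inr p → p ∈ free0 ∧ hash t ≤ p)
    (hinj : ∀ t₁ t₂, isIns t₁ = true → isIns t₂ = true →
      consumed t₁ = consumed t₂ → t₁ = t₂)
    -- a monotone path through the dot diagram: time threshold as a function of hash
    (P : ℕ → ℕ) (hP : Monotone P) :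
    -- surplus below `P` minus the free slots of `[i, s-1]` is at most `c_s`
    ((Finset.univ.filter (fun t : Fin T =>
        isIns t = true ∧ i ≤ hash t ∧ hash t < s ∧ (t : ℕ) < P (hash t))).card : ℤ)
      - ((Finset.univ.filter (fun t : Fin T =>
        isIns t = false ∧ i ≤ hash t ∧ hash t < s ∧ (t : ℕ) < P (hash t))).card : ℤ)
      - ((free0.filter (fun p => i ≤ p ∧ p < s)).card : ℤ)
      ≤ ((Finset.univ.filter (fun t : Fin T =>
        isIns t = true ∧ hash t < s ∧
          Sum.elim (fun t' : Fin T => s ≤ hash t') (fun p : ℕ => s ≤ p)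
            (consumed t))).card : ℤ) := by

  classical
  set B := Finset.univ.filter (fun t : Fin T =>
      isIns t = true ∧ i ≤ hash t ∧ hash t < s ∧ (t : ℕ) < P (hash t)) with hB
  set R := Finset.univ.filter (fun t : Fin T =>
      isIns t = false ∧ i ≤ hash t ∧ hash t < s ∧ (t : ℕ) < P (hash t)) with hR
  set F := free0.filter (fun p => i ≤ p ∧ p < s) with hF
  set C := Finset.univ.filter (fun t : Fin T =>
      isIns t = true ∧ hash t < s ∧
        Sum.elim (fun t' : Fin T => s ≤ hash t') (fun p : ℕ => s ≤ p)
          (consumed t)) with hC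
  have key : B.card ≤ C.card + (R.card + F.card) := by
    have hsplit : (B.filter (fun t => Sum.elim (fun t' : Fin T => s ≤ hash t')
        (fun p : ℕ => s ≤ p) (consumed t))).card
        + (B.filter (fun t => ¬ Sum.elim (fun t' : Fin T => s ≤ hash t')
        (fun p : ℕ => s ≤ p) (consumed t))).card = B.card :=
      Finset.card_filter_add_card_filter_not _
    have h1 : (B.filter (fun t => Sum.elim (fun t' : Fin T => s ≤ hash t')
        (fun p : ℕ => s ≤ p) (consumed t))).card ≤ C.card := by
      apply Finset.card_le_card
      intro t ht
      simp only [hB, hC, Finset.mem_filter, Finset.mem_univ, true_and] at ht ⊢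
      exact ⟨ht.1.1, ht.1.2.2.1, ht.2⟩
    have h2 : (B.filter (fun t => ¬ Sum.elim (fun t' : Fin T => s ≤ hash t')
        (fun p : ℕ => s ≤ p) (consumed t))).card ≤ R.card + F.card := by
      rw [← Finset.card_disjSum]
      apply Finset.card_le_card_of_injOn (fun t => consumed t)
      · intro t ht
        simp only [hB, Finset.mem_coe, Finset.mem_filter, Finset.mem_univ, true_and] at ht ⊢
        obtain ⟨⟨hins, hi, hls, hlt⟩, hnc⟩ := ht
        cases hcon : consumed t with
        | inl t' =>
          obtain ⟨hdel, htt, hhh⟩ := htomb t t' hcon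
          rw [hcon] at hnc
          simp only [Sum.elim_inl, not_le] at hnc
          apply Finset.inl_mem_disjSum.mpr
          simp only [hR, Finset.mem_filter, Finset.mem_univ, true_and]
          refine ⟨hdel, le_trans hi hhh, hnc, ?_⟩
          calc (t' : ℕ) < (t : ℕ) := htt
            _ < P (hash t) := hlt
            _ ≤ P (hash t') := hP hhh
        | inr p =>
          obtain ⟨hp0, hhp⟩ := hfree t p hcon
          rw [hcon] at hnc
          simp only [Sum.elim_inr, not_le] at hnc
          apply Finset.inr_mem_disjSum.mpr
          simp only [hF, Finset.mem_filter]
          exact ⟨hp0, le_trans hi hhp, hnc⟩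
      · intro t₁ h₁ t₂ h₂ heq
        simp only [Finset.coe_filter, Set.mem_setOf_eq, hB, Finset.mem_filter,
          Finset.mem_univ, true_and] at h₁ h₂
        exact hinj t₁ t₂ h₁.1.1 h₂.1.1 heq
    omega
  push_cast
  omega
end
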